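/- For every order-3 real tensor X : Fin I₁ → Fin I₂ → Fin I₃ → ℝ, letting R₁, R₂, R₃ be the ranks of its mode-1, mode-2 and mode-3 matricizations respectively, there exist a core tensor C : Fin R₁ → Fin R₂ → Fin R₃ → ℝ and factor matrices U : Matrix (Fin I₁) (Fin R₁) ℝ, V : Matrix (Fin I₂) (Fin R₂) ℝ, W : Matrix (Fin I₃) (Fin R₃) ℝ such that for all indices i, j, k: X i j k = ∑ a ∑ b ∑ c, C a b c * U i a * V j b * W k c (i.e., X equals the Tucker composition C ×₁ U ×₂ V ×₃ W exactly). -/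

import Mathlib

/-- Mode-1 matricization of an order-3 tensor. -/
def mode1Mat {I₁ I₂ I₃ : ℕ} (X : Fin I₁ → Fin I₂ → Fin I₃ → ℝ) :
    Matrix (Fin I₁) (Fin I₂ × Fin I₃) ℝ :=
  Matrix.of fun i jk => X i jk.1 jk.2

/-- Mode-2 matricization of an order-3 tensor. -/
def mode2Mat {I₁ I₂ I₃ : ℕ} (X : Fin I₁ → Fin I₂ → Fin I₃ → ℝ) :
    Matrix (Fin I₂) (Fin I₁ × Fin I₃) ℝ :=
  Matrix.of fun j ik => X ik.1 j ik.2

/-- Mode-3 matricization of an order-3 tensor. -/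
def mode3Mat {I₁ I₂ I₃ : ℕ} (X : Fin I₁ → Fin I₂ → Fin I₃ → ℝ) :
    Matrix (Fin I₃) (Fin I₁ × Fin I₂) ℝ :=
  Matrix.of fun k ij => X ij.1 ij.2 k

/-!
For each mode choose a basis of the column space of the matricization, let `U` have these basis
vectors as columns, and extend the coordinate map of the basis to a linear map `L` on the whole
space; then `U * L` fixes every column of the matricization. Multilinear multiplication is the
action of `U ⊗ₖ V ⊗ₖ W` on the flattened tensor, so it composes like matrix multiplication, and the
core `C = X ×₁ L₁ ×₂ L₂ ×₃ L₃` satisfies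
`C ×₁ U ×₂ V ×₃ W = X ×₁ (U L₁) ×₂ (V L₂) ×₃ (W L₃) = X`.
-/

open Finset Matrix Module
open scoped Kronecker

theorem LinearMap.exists_comp_comp_eq_self {K V W : Type*} [Field K] [AddCommGroup V]
    [Module K V] [AddCommGroup W] [Module K W] (f : V →ₗ[K] W)
    [FiniteDimensional K (range f)] :
    ∃ (u : (Fin (finrank K (range f)) → K) →ₗ[K] W) (l : W →ₗ[K] Fin (finrank K (range f)) → K),
      u ∘ₗ l ∘ₗ f = f := by
  let e := (finBasis K (range f)).equivFun
  obtain ⟨l, hl⟩ := LinearMap.exists_extend e.toLinearMap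
  refine ⟨(range f).subtype ∘ₗ e.symm.toLinearMap, l, LinearMap.ext fun v => ?_⟩
  have hlv : l (f v) = e ⟨f v, mem_range_self f v⟩ := congr($hl ⟨f v, mem_range_self f v⟩)
  simp [hlv]

theorem Matrix.exists_mul_mul_eq_self {m n K : Type*} [Fintype m] [Fintype n] [Field K]
    (M : Matrix m n K) :
    ∃ (U : Matrix m (Fin M.rank) K) (L : Matrix (Fin M.rank) m K), U * L * M = M := by
  classical
  obtain ⟨u, l, h⟩ : ∃ (u : (Fin M.rank → K) →ₗ[K] m → K) (l : (m → K) →ₗ[K] Fin M.rank → K),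
      u ∘ₗ l ∘ₗ M.mulVecLin = M.mulVecLin :=
    M.mulVecLin.exists_comp_comp_eq_self
  refine ⟨LinearMap.toMatrix' u, LinearMap.toMatrix' l,
    Matrix.toLin'.injective <| LinearMap.ext fun v => ?_⟩
  simpa [← Matrix.mulVec_mulVec, LinearMap.toMatrix'_mulVec] using congr($h v)

section Tucker

variable {R ι₁ ι₂ ι₃ κ₁ κ₂ κ₃ : Type*} [CommSemiring R] [Fintype ι₁] [Fintype ι₂] [Fintype ι₃]

/-- The Tucker composition `C ×₁ U ×₂ V ×₃ W`. -/
def tuckerProd (C : ι₁ → ι₂ → ι₃ → R) (U : Matrix κ₁ ι₁ R) (V : Matrix κ₂ ι₂ R)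
    (W : Matrix κ₃ ι₃ R) : κ₁ → κ₂ → κ₃ → R :=
  fun i j k => ∑ a, ∑ b, ∑ c, C a b c * U i a * V j b * W k c

theorem tuckerProd_apply_eq_sum_mul_sum (C : ι₁ → ι₂ → ι₃ → R) (U : Matrix κ₁ ι₁ R)
    (V : Matrix κ₂ ι₂ R) (W : Matrix κ₃ ι₃ R) (i : κ₁) (j : κ₂) (k : κ₃) :
    tuckerProd C U V W i j k = ∑ a, U i a * ∑ b, V j b * ∑ c, W k c * C a b c := by
  simp only [tuckerProd, mul_sum]
  exact sum_congr rfl fun a _ => sum_congr rfl fun b _ => sum_congr rfl fun c _ => by ring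

theorem tuckerProd_apply_eq_kronecker_mulVec (C : ι₁ → ι₂ → ι₃ → R) (U : Matrix κ₁ ι₁ R)
    (V : Matrix κ₂ ι₂ R) (W : Matrix κ₃ ι₃ R) (i : κ₁) (j : κ₂) (k : κ₃) :
    tuckerProd C U V W i j k = (U ⊗ₖ (V ⊗ₖ W) *ᵥ fun x => C x.1 x.2.1 x.2.2) (i, j, k) := by
  simp only [tuckerProd, mulVec, dotProduct, Fintype.sum_prod_type, kronecker_apply]
  exact sum_congr rfl fun a _ => sum_congr rfl fun b _ => sum_congr rfl fun c _ => by ring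

theorem tuckerProd_tuckerProd {ν₁ ν₂ ν₃ : Type*} [Fintype κ₁] [Fintype κ₂] [Fintype κ₃]
    (C : ι₁ → ι₂ → ι₃ → R) (U : Matrix κ₁ ι₁ R) (V : Matrix κ₂ ι₂ R) (W : Matrix κ₃ ι₃ R)
    (U' : Matrix ν₁ κ₁ R) (V' : Matrix ν₂ κ₂ R) (W' : Matrix ν₃ κ₃ R) :
    tuckerProd (tuckerProd C U V W) U' V' W' = tuckerProd C (U' * U) (V' * V) (W' * W) := by
  ext i j k
  simp only [tuckerProd_apply_eq_kronecker_mulVec, Prod.mk.eta, mulVec_mulVec, mul_kronecker_mul]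

end Tucker

theorem tuckerProd_eq_self_of_mul_modeMat_eq {I₁ I₂ I₃ : ℕ} (X : Fin I₁ → Fin I₂ → Fin I₃ → ℝ)
    {P₁ : Matrix (Fin I₁) (Fin I₁) ℝ} {P₂ : Matrix (Fin I₂) (Fin I₂) ℝ}
    {P₃ : Matrix (Fin I₃) (Fin I₃) ℝ} (h₁ : P₁ * mode1Mat X = mode1Mat X)
    (h₂ : P₂ * mode2Mat X = mode2Mat X) (h₃ : P₃ * mode3Mat X = mode3Mat X) :
    tuckerProd X P₁ P₂ P₃ = X := by
  have e₁ (i j k) : ∑ a, P₁ i a * X a j k = X i j k := by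
    simpa [mul_apply, mode1Mat] using congrFun₂ h₁ i (j, k)
  have e₂ (i j k) : ∑ b, P₂ j b * X i b k = X i j k := by
    simpa [mul_apply, mode2Mat] using congrFun₂ h₂ j (i, k)
  have e₃ (i j k) : ∑ c, P₃ k c * X i j c = X i j k := by
    simpa [mul_apply, mode3Mat] using congrFun₂ h₃ k (i, j)
  ext i j k
  simp only [tuckerProd_apply_eq_sum_mul_sum, e₃, e₂, e₁]

/-- Tucker decomposition (HOSVD existence): every order-3 real tensor admits an exact
Tucker decomposition whose core dimensions are the ranks of its three matricizations. -/
theorem tucker_decomposition_exists {I₁ I₂ I₃ : ℕ}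
    (X : Fin I₁ → Fin I₂ → Fin I₃ → ℝ) :
    ∃ (C : Fin (mode1Mat X).rank → Fin (mode2Mat X).rank → Fin (mode3Mat X).rank → ℝ)
      (U : Matrix (Fin I₁) (Fin (mode1Mat X).rank) ℝ)
      (V : Matrix (Fin I₂) (Fin (mode2Mat X).rank) ℝ)
      (W : Matrix (Fin I₃) (Fin (mode3Mat X).rank) ℝ),
      ∀ i j k, X i j k = ∑ a, ∑ b, ∑ c, C a b c * U i a * V j b * W k c := by
  obtain ⟨U, L₁, h₁⟩ := (mode1Mat X).exists_mul_mul_eq_self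
  obtain ⟨V, L₂, h₂⟩ := (mode2Mat X).exists_mul_mul_eq_self
  obtain ⟨W, L₃, h₃⟩ := (mode3Mat X).exists_mul_mul_eq_self
  have hX : tuckerProd (tuckerProd X L₁ L₂ L₃) U V W = X := by
    rw [tuckerProd_tuckerProd, tuckerProd_eq_self_of_mul_modeMat_eq X h₁ h₂ h₃]
  exact ⟨tuckerProd X L₁ L₂ L₃, U, V, W, fun i j k => (congrFun₃ hX i j k).symm⟩
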